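/- Let Ω be a finite probability space, X : Ω → ℕ a random variable counting successes, and let E ⊆ Ω. If for events (S_i)_{i∈I} partitioning the event {X takes value via edge i}, each S_i is independent of a Bernoulli(p_i) outcome, then under the decomposition P(take α | E) = ∑_i P(probe_i | E) * p_i with 0 < p_i ≤ p ≤ 1, one has ((1-p)/p) * P(take α | E) ≤ ∑_i P(probe_i | E) * (1 - p_i) ≤ 1 - P(take α | E). -/

import Mathlib

open Finset

/-- Conditional probability of the event `A` given the event `E`, for a
finite probability space described by a mass function `pr`. -/
noncomputable def condProb {Ω : Type*} [Fintype Ω] [DecidableEq Ω] (pr : Ω → ℝ) (A E : Finset Ω) : ℝ :=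
  (∑ ω ∈ A ∩ E, pr ω) / (∑ ω ∈ E, pr ω)

/-!
The lower bound holds termwise: `p_i ≤ p` gives `(1 - p) / p * p_i ≤ 1 - p_i`. For the upper
bound, the probe events are disjoint, so their conditional probabilities sum to at most `1`, and
`∑ P(probe_i | E) (1 - p_i) = ∑ P(probe_i | E) - P(take α | E)`.
-/

section condProb

variable {Ω : Type*} [Fintype Ω] [DecidableEq Ω] {pr : Ω → ℝ}

theorem condProb_nonneg (hpr : ∀ ω, 0 ≤ pr ω) (A E : Finset Ω) : 0 ≤ condProb pr A E :=
  div_nonneg (sum_nonneg fun ω _ => hpr ω) (sum_nonneg fun ω _ => hpr ω)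

theorem condProb_le_one (hpr : ∀ ω, 0 ≤ pr ω) (A E : Finset Ω) : condProb pr A E ≤ 1 :=
  div_le_one_of_le₀ (sum_le_sum_of_subset_of_nonneg inter_subset_right fun ω _ _ => hpr ω)
    (sum_nonneg fun ω _ => hpr ω)

theorem condProb_biUnion {I : Type*} {s : Finset I} {A : I → Finset Ω}
    (hA : (s : Set I).PairwiseDisjoint A) (E : Finset Ω) :
    condProb pr (s.biUnion A) E = ∑ i ∈ s, condProb pr (A i) E := by
  have hAE : (s : Set I).PairwiseDisjoint fun i => A i ∩ E := fun i hi j hj hij =>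
    (hA hi hj hij).mono inter_subset_left inter_subset_left
  rw [condProb, biUnion_inter, sum_biUnion hAE, sum_div]
  rfl

theorem sum_condProb_le_one (hpr : ∀ ω, 0 ≤ pr ω) {I : Type*} {s : Finset I} {A : I → Finset Ω}
    (hA : (s : Set I).PairwiseDisjoint A) (E : Finset Ω) :
    ∑ i ∈ s, condProb pr (A i) E ≤ 1 :=
  condProb_biUnion hA E ▸ condProb_le_one hpr _ E

end condProb

theorem one_sub_div_mul_le_one_sub {p q : ℝ} (hq : 0 < q) (hqp : q ≤ p) :
    (1 - p) / p * q ≤ 1 - q := by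
  rw [div_mul_eq_mul_div, div_le_iff₀ (hq.trans_le hqp)]
  linarith

theorem stmt_5_general {Ω : Type*} [Fintype Ω] [DecidableEq Ω] (pr : Ω → ℝ)
    (hpr : ∀ ω, 0 ≤ pr ω)
    (E : Finset Ω)
    {I : Type*} [Fintype I]
    (probe : I → Finset Ω)   -- "OPT's last probe of α is the edge i"
    (take : Finset Ω)        -- "OPT takes α on its last allowed probe"
    (hdisj : ∀ i j, i ≠ j → Disjoint (probe i) (probe j))
    (pi : I → ℝ) (p : ℝ) (hpi0 : ∀ i, 0 < pi i) (hpip : ∀ i, pi i ≤ p)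
    -- decomposition over adjacent edges, using independence of the last probe's result:
    (hdecomp : condProb pr take E = ∑ i, condProb pr (probe i) E * pi i) :
    ((1 - p) / p) * condProb pr take E ≤ ∑ i, condProb pr (probe i) E * (1 - pi i) ∧
      ∑ i, condProb pr (probe i) E * (1 - pi i) ≤ 1 - condProb pr take E := by
  constructor
  · rw [hdecomp, mul_sum]
    refine sum_le_sum fun i _ => ?_
    rw [mul_left_comm]
    exact mul_le_mul_of_nonneg_left (one_sub_div_mul_le_one_sub (hpi0 i) (hpip i))
      (condProb_nonneg hpr _ E)
  · have hprobe : ∑ i, condProb pr (probe i) E ≤ 1 :=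
      sum_condProb_le_one hpr (fun i _ j _ hij => hdisj i j hij) E
    calc ∑ i, condProb pr (probe i) E * (1 - pi i)
        = ∑ i, condProb pr (probe i) E - condProb pr take E := by
          simp only [hdecomp, mul_one_sub, sum_sub_distrib]
      _ ≤ 1 - condProb pr take E := by linarith

theorem stmt_5 {Ω : Type*} [Fintype Ω] [DecidableEq Ω] (pr : Ω → ℝ)
    (hpr : ∀ ω, 0 ≤ pr ω) (hsum : ∑ ω, pr ω = 1)
    (E : Finset Ω) (hE : 0 < ∑ ω ∈ E, pr ω)
    {I : Type*} [Fintype I]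
    (probe : I → Finset Ω)   -- "OPT's last probe of α is the edge i"
    (take : Finset Ω)        -- "OPT takes α on its last allowed probe"
    (hdisj : ∀ i j, i ≠ j → Disjoint (probe i) (probe j))
    (pi : I → ℝ) (p : ℝ) (hpi0 : ∀ i, 0 < pi i) (hpip : ∀ i, pi i ≤ p) (hp1 : p ≤ 1)
    -- decomposition over adjacent edges, using independence of the last probe's result:
    (hdecomp : condProb pr take E = ∑ i, condProb pr (probe i) E * pi i) :
    ((1 - p) / p) * condProb pr take E ≤ ∑ i, condProb pr (probe i) E * (1 - pi i) ∧
      ∑ i, condProb pr (probe i) E * (1 - pi i) ≤ 1 - condProb pr take E :=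
  stmt_5_general pr hpr E probe take hdisj pi p hpi0 hpip hdecomp
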